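/- Let h be a Lie algebra and E a vector space over a field of characteristic zero, and let a ↦ δ(a) be a Lie algebra homomorphism from h into the Lie algebra of coderivations of the deconcatenation coalgebra S(E) with δ(a)(1) = 0. Give E the h-module structure μ₁(a) = pr_E∘δ(a)|_E and give Hom(S²E, E) the h-module structure (a·φ)(e₁⊙e₂) = μ₁(a)(φ(e₁⊙e₂)) − φ((μ₁(a)e₁)⊙e₂) − φ(e₁⊙(μ₁(a)e₂)). Then the second components R₂(a) := pr_E ∘ δ(a)|_{S²E} form a Chevalley–Eilenberg 1-cocycle R₂ : h → Hom(S²E, E): R₂([a,b]) = a·R₂(b) − b·R₂(a) for all a, b ∈ h. -/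

import Mathlib

/-!
Formalization of a statement from "Exponential map and L∞ algebra associated to a Lie pair"
(Laurent-Gengoux, Stiénon, Xu), in the algebraic setting of a Lie pair (g, h) over a field
of characteristic zero.
-/

noncomputable section
open scoped TensorProduct
open UniversalEnvelopingAlgebra

variable (K : Type*) [Field K] [CharZero K]

section Sym
variable (E : Type*) [AddCommGroup E] [Module K E]

/-- Model of the symmetric algebra `S(E)`: polynomials on a basis of `E`. -/
abbrev SymA := MvPolynomial (Module.Basis.ofVectorSpaceIndex K E) K

/-- The canonical inclusion `E → S(E)` (onto `S¹(E)`). -/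
def symι : E →ₗ[K] SymA K E :=
  (Finsupp.linearCombination K (fun i => MvPolynomial.X i)).comp
    ((Module.Basis.ofVectorSpace K E).repr : E ≃ₗ[K] _).toLinearMap

/-- Universal property of `S(E)`: the lift of a linear map into a commutative algebra,
i.e. the unique algebra morphism `S(E) → A` extending it. -/
def symLift {A : Type*} [CommRing A] [Algebra K A] (f : E →ₗ[K] A) : SymA K E →ₐ[K] A :=
  MvPolynomial.aeval fun i => f (Module.Basis.ofVectorSpace K E i)

/-- The deconcatenation comultiplication on `S(E)`, i.e. the unique algebra morphism
`S(E) → S(E) ⊗ S(E)` sending each `e ∈ E` to `e ⊗ 1 + 1 ⊗ e`. -/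
def symComul : SymA K E →ₐ[K] (SymA K E ⊗[K] SymA K E) :=
  symLift K E ((((TensorProduct.mk K (SymA K E) (SymA K E)).flip 1)
    + (TensorProduct.mk K (SymA K E) (SymA K E) 1)).comp (symι K E))

/-- The counit of `S(E)`: the unique algebra morphism `S(E) → K` killing `E`. -/
def symCounit : SymA K E →ₐ[K] K := symLift K E 0

/-- The projection `S(E) → E` onto the degree-one component `S¹(E) = E`. -/
def symPr : SymA K E →ₗ[K] E :=
  (Finsupp.lsum K fun xs : (Module.Basis.ofVectorSpaceIndex K E) →₀ ℕ =>
    (LinearMap.ringLmapEquivSelf K K E).symm <|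
      letI := Classical.propDecidable (∃ i, xs = Finsupp.single i 1)
      if h : ∃ i, xs = Finsupp.single i 1 then (Module.Basis.ofVectorSpace K E) h.choose else 0)
    ∘ₗ (AddMonoidAlgebra.coeffLinearEquiv K).toLinearMap

/-- The unique derivation of `S(E)` extending the linear map `f : E → E`. -/
def symDer (f : E →ₗ[K] E) : SymA K E →ₗ[K] SymA K E :=
  (MvPolynomial.mkDerivation K fun i => symι K E (f (Module.Basis.ofVectorSpace K E i)) :
    Derivation K (SymA K E) (SymA K E)).toLinearMap

/-- The filtration `S^{≤n}(E)`: the span of products of at most `n` elements of `E`. -/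
def symFil (n : ℕ) : Submodule K (SymA K E) :=
  Submodule.span K {x | ∃ (m : ℕ) (v : Fin m → E), m ≤ n ∧ x = ∏ i, symι K E (v i)}

/-- `S^{≥1}(E) = ⊕_{m≥1} Sᵐ(E)`: the span of products of at least one element of `E`. -/
def symFilGe1 : Submodule K (SymA K E) :=
  Submodule.span K {x | ∃ (m : ℕ) (v : Fin m → E), 1 ≤ m ∧ x = ∏ i, symι K E (v i)}

/-- A coderivation of the (deconcatenation) coalgebra `S(E)`:
`Δ ∘ δ = (δ ⊗ id + id ⊗ δ) ∘ Δ`. -/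
def IsCoderivation (δ : SymA K E →ₗ[K] SymA K E) : Prop :=
  ∀ s, symComul K E (δ s)
    = TensorProduct.map δ LinearMap.id (symComul K E s)
      + TensorProduct.map LinearMap.id δ (symComul K E s)

end Sym

/-!
A coderivation `D` of `S(E)` with `D 1 = 0` sends each `e ∈ E` to a primitive element, and
`D(e₁e₂) - D(e₁)e₂ - e₁D(e₂)` is primitive as well. In characteristic zero the primitive elements
of `S(E)` are exactly `E`: the scaling endomorphism `σ_c` (multiplication by `c` on `E`) satisfies
`σ_{s+t} = m ∘ (σ_s ⊗ σ_t) ∘ Δ`, so `σ₂ p = 2p` for primitive `p`, whereas `σ₂` multiplies a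
monomial of degree `n` by `2ⁿ`. Hence `δ(b)(e₁e₂) = R₂(b)(e₁e₂) + μ₁(b)(e₁)e₂ + e₁μ₁(b)(e₂)`, and
the cocycle identity is `pr_E` of `δ[a,b] = δ(a)δ(b) - δ(b)δ(a)` applied to `e₁e₂`.
-/

section SymmetricAlgebra
open MvPolynomial
variable {K} {E : Type*} [AddCommGroup E] [Module K E]
omit [CharZero K]

local notation "bE" => Module.Basis.ofVectorSpace K E

lemma symι_basis (i : Module.Basis.ofVectorSpaceIndex K E) : symι K E (bE i) = X i := by
  rw [symι, LinearMap.comp_apply, LinearEquiv.coe_coe, Module.Basis.repr_self]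
  simp

lemma symLift_symι {A : Type*} [CommRing A] [Algebra K A] (f : E →ₗ[K] A) (e : E) :
    symLift K E f (symι K E e) = f e := by
  conv_rhs => rw [← (bE).linearCombination_repr e]
  simp [symι, symLift, Finsupp.linearCombination_apply, Finsupp.sum, map_sum]

lemma symComul_symι (e : E) :
    symComul K E (symι K E e) = symι K E e ⊗ₜ[K] 1 + 1 ⊗ₜ[K] symι K E e :=
  symLift_symι _ e

lemma symComul_symι_mul_symι (u v : E) :
    symComul K E (symι K E u * symι K E v)
      = (symι K E u * symι K E v) ⊗ₜ[K] 1 + 1 ⊗ₜ[K] (symι K E u * symι K E v)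
        + symι K E u ⊗ₜ[K] symι K E v + symι K E v ⊗ₜ[K] symι K E u := by
  simp only [map_mul, symComul_symι, add_mul, mul_add, Algebra.TensorProduct.tmul_mul_tmul,
    mul_one, one_mul]
  abel

lemma symPr_monomial_single (i : Module.Basis.ofVectorSpaceIndex K E) (c : K) :
    symPr K E (monomial (Finsupp.single i 1) c) = c • bE i := by
  have hi : ∃ j, Finsupp.single i 1 = Finsupp.single j 1 := ⟨i, rfl⟩
  have hchoose : hi.choose = i := (Finsupp.single_left_injective one_ne_zero hi.choose_spec).symm
  simp [symPr, ← single_eq_monomial, dif_pos hi, hchoose]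

lemma symPr_monomial_of_degree_ne_one {m : Module.Basis.ofVectorSpaceIndex K E →₀ ℕ}
    (hm : m.degree ≠ 1) (c : K) : symPr K E (monomial m c) = 0 := by
  have hm' : ¬∃ i, m = Finsupp.single i 1 := by
    rintro ⟨i, rfl⟩
    exact hm (Finsupp.degree_single i 1)
  simp [symPr, ← single_eq_monomial, hm']

lemma eq_symι_symPr_of_coeff {p : SymA K E} (hp : ∀ m, m.degree ≠ 1 → coeff m p = 0) :
    p = symι K E (symPr K E p) := by
  conv_lhs => rw [p.as_sum]
  conv_rhs => rw [p.as_sum, map_sum, map_sum]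
  refine Finset.sum_congr rfl fun m hm => ?_
  obtain ⟨i, rfl⟩ : ∃ i, Finsupp.single i 1 = m := by
    rw [← Set.mem_range, Finsupp.range_single_one]
    by_contra hd
    exact MvPolynomial.mem_support_iff.mp hm (hp m hd)
  rw [symPr_monomial_single, map_smul, symι_basis, X, smul_monomial, smul_eq_mul, mul_one]

lemma symPr_eq_zero_of_coeff {p : SymA K E} (hp : ∀ i, coeff (Finsupp.single i 1) p = 0) :
    symPr K E p = 0 := by
  rw [p.as_sum, map_sum]
  refine Finset.sum_eq_zero fun m _ => ?_
  by_cases hm : m.degree = 1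
  · obtain ⟨i, rfl⟩ : ∃ i, Finsupp.single i 1 = m := by
      rwa [← Set.mem_range, Finsupp.range_single_one]
    rw [hp i, monomial_zero, map_zero]
  · exact symPr_monomial_of_degree_ne_one hm _

lemma symAlgHom_ext {A : Type*} [CommRing A] [Algebra K A] {f g : SymA K E →ₐ[K] A}
    (h : ∀ e, f (symι K E e) = g (symι K E e)) : f = g :=
  algHom_ext fun i => by simpa only [symι_basis] using h (bE i)

variable (K E) in
def symScale (c : K) : SymA K E →ₐ[K] SymA K E := symLift K E (c • symι K E)

lemma symScale_symι (c : K) (e : E) : symScale K E c (symι K E e) = c • symι K E e :=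
  symLift_symι _ e

lemma symScale_X (c : K) (i : Module.Basis.ofVectorSpaceIndex K E) :
    symScale K E c (X i) = c • X i := by
  rw [← symι_basis, symScale_symι]

lemma symScale_one : symScale K E (1 : K) = AlgHom.id K (SymA K E) :=
  symAlgHom_ext fun e => by rw [symScale_symι, one_smul, AlgHom.id_apply]

lemma symScale_add (s t : K) (p : SymA K E) :
    symScale K E (s + t) p
      = Algebra.TensorProduct.productMap (symScale K E s) (symScale K E t) (symComul K E p) := by
  suffices symScale K E (s + t)
      = (Algebra.TensorProduct.productMap (symScale K E s) (symScale K E t)).comp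
          (symComul K E) from DFunLike.congr_fun this p
  refine symAlgHom_ext fun e => ?_
  simp only [AlgHom.comp_apply, symComul_symι, map_add,
    Algebra.TensorProduct.productMap_apply_tmul, map_one, symScale_symι, mul_one, one_mul,
    add_smul]

lemma symScale_monomial (c : K) (d : Module.Basis.ofVectorSpaceIndex K E →₀ ℕ) (r : K) :
    symScale K E c (monomial d r) = monomial d (c ^ d.degree * r) := by
  rw [monomial_eq, monomial_eq, map_mul, algHom_C, map_finsuppProd]
  simp only [map_pow, symScale_X, smul_pow]
  rw [Finsupp.prod, Finset.prod_smul, Finset.prod_pow_eq_pow_sum, ← Finsupp.degree_apply,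
    mul_smul_comm, C_mul, smul_eq_C_mul, mul_assoc]
  rfl

lemma coeff_symScale (c : K) (p : SymA K E) (m : Module.Basis.ofVectorSpaceIndex K E →₀ ℕ) :
    coeff m (symScale K E c p) = c ^ m.degree * coeff m p := by
  classical
  induction p using MvPolynomial.induction_on' with
  | monomial d r =>
    rw [symScale_monomial, coeff_monomial, coeff_monomial]
    split_ifs with hdm
    · rw [hdm]
    · rw [mul_zero]
  | add p q hp hq => rw [map_add, coeff_add, coeff_add, hp, hq, mul_add]

variable (K E) in
def IsSymPrimitive (p : SymA K E) : Prop := symComul K E p = p ⊗ₜ[K] 1 + 1 ⊗ₜ[K] p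

lemma IsSymPrimitive.symScale_two {p : SymA K E} (hp : IsSymPrimitive K E p) :
    symScale K E 2 p = (2 : K) • p := by
  rw [← one_add_one_eq_two, symScale_add, hp, symScale_one]
  simp only [map_add, Algebra.TensorProduct.productMap_apply_tmul, map_one, AlgHom.id_apply,
    mul_one, one_mul, add_smul, one_smul]

lemma IsCoderivation.isSymPrimitive_apply_symι {D : SymA K E →ₗ[K] SymA K E}
    (hD : IsCoderivation K E D) (hD1 : D 1 = 0) (e : E) : IsSymPrimitive K E (D (symι K E e)) := by
  rw [IsSymPrimitive, hD, symComul_symι]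
  simp only [map_add, TensorProduct.map_tmul, LinearMap.id_coe, id_eq, hD1,
    TensorProduct.zero_tmul, TensorProduct.tmul_zero, add_zero, zero_add]

end SymmetricAlgebra

section PrimitiveElements
open MvPolynomial
variable {K} {E : Type*} [AddCommGroup E] [Module K E]

lemma coeff_eq_zero_of_symScale_two_eq {p : SymA K E} {n : ℕ}
    (hp : symScale K E 2 p = (2 : K) ^ n • p) {m : Module.Basis.ofVectorSpaceIndex K E →₀ ℕ}
    (hm : m.degree ≠ n) : coeff m p = 0 := by
  have hcoeff := congrArg (coeff m) hp
  rw [coeff_symScale, coeff_smul, smul_eq_mul] at hcoeff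
  by_contra hc
  have hpow : ((2 ^ m.degree : ℕ) : K) = ((2 ^ n : ℕ) : K) := by
    push_cast
    exact mul_right_cancel₀ hc hcoeff
  exact hm (Nat.pow_right_injective le_rfl (Nat.cast_injective hpow))

lemma IsSymPrimitive.eq_symι_symPr {p : SymA K E} (hp : IsSymPrimitive K E p) :
    p = symι K E (symPr K E p) :=
  eq_symι_symPr_of_coeff fun _ hm =>
    coeff_eq_zero_of_symScale_two_eq (n := 1) (by rw [pow_one, hp.symScale_two]) hm

lemma symPr_symι_mul_symι (u v : E) : symPr K E (symι K E u * symι K E v) = 0 := by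
  have hscale : symScale K E 2 (symι K E u * symι K E v)
      = (2 : K) ^ 2 • (symι K E u * symι K E v) := by
    rw [map_mul, symScale_symι, symScale_symι, smul_mul_smul_comm, sq]
  exact symPr_eq_zero_of_coeff fun i =>
    coeff_eq_zero_of_symScale_two_eq hscale (by rw [Finsupp.degree_single]; decide)

end PrimitiveElements

namespace IsCoderivation
open TensorProduct
variable {K} {E : Type*} [AddCommGroup E] [Module K E] {D : SymA K E →ₗ[K] SymA K E}

lemma apply_symι (hD : IsCoderivation K E D) (hD1 : D 1 = 0) (e : E) :
    D (symι K E e) = symι K E (symPr K E (D (symι K E e))) :=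
  (hD.isSymPrimitive_apply_symι hD1 e).eq_symι_symPr

lemma apply_symι_mul_symι (hD : IsCoderivation K E D) (hD1 : D 1 = 0) (u v : E) :
    D (symι K E u * symι K E v)
      = symι K E (symPr K E (D (symι K E u * symι K E v)))
        + symι K E (symPr K E (D (symι K E u))) * symι K E v
        + symι K E u * symι K E (symPr K E (D (symι K E v))) := by
  set u' := symPr K E (D (symι K E u))
  set v' := symPr K E (D (symι K E v))
  have hu : D (symι K E u) = symι K E u' := hD.apply_symι hD1 u
  have hv : D (symι K E v) = symι K E v' := hD.apply_symι hD1 v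
  set w := D (symι K E u * symι K E v) - symι K E u' * symι K E v - symι K E u * symι K E v'
    with hw_def
  have hw : IsSymPrimitive K E w := by
    simp only [w, IsSymPrimitive, map_sub, hD (symι K E u * symι K E v), symComul_symι_mul_symι,
      map_add, map_tmul, LinearMap.id_coe, id_eq, hD1, zero_tmul, tmul_zero, hu, hv, sub_tmul,
      tmul_sub]
    abel
  have hpr : symPr K E w = symPr K E (D (symι K E u * symι K E v)) := by
    simp only [w, map_sub, symPr_symι_mul_symι, sub_zero]
  rw [← hpr, ← hw.eq_symι_symPr, hw_def]
  abel

end IsCoderivation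

attribute [local instance 100] LieRing.ofAssociativeRing

/-- Let `δ : h → coderivations of S(E) with δ(a)(1) = 0` be a Lie algebra
homomorphism. With the `h`-module structures `μ₁(a) = pr_E ∘ δ(a)|_E` on `E` and the induced one
on `Hom(S²E, E)`, the second components `R₂(a) = pr_E ∘ δ(a)|_{S²E}` form a Chevalley–Eilenberg
1-cocycle: `R₂([a,b]) = a·R₂(b) − b·R₂(a)`. -/
theorem second_component_is_cocycle
    (h : Type*) [LieRing h] [LieAlgebra K h]
    (E : Type*) [AddCommGroup E] [Module K E]
    (δ : h →ₗ⁅K⁆ Module.End K (SymA K E))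
    (hcoder : ∀ a : h, IsCoderivation K E (δ a))
    (hone : ∀ a : h, δ a 1 = 0) :
    ∀ (a b : h) (e₁ e₂ : E),
      symPr K E (δ ⁅a, b⁆ (symι K E e₁ * symι K E e₂))
        = (symPr K E (δ a (symι K E (symPr K E (δ b (symι K E e₁ * symι K E e₂)))))
            - symPr K E (δ b (symι K E (symPr K E (δ a (symι K E e₁))) * symι K E e₂))
            - symPr K E (δ b (symι K E e₁ * symι K E (symPr K E (δ a (symι K E e₂))))))
          - (symPr K E (δ b (symι K E (symPr K E (δ a (symι K E e₁ * symι K E e₂)))))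
            - symPr K E (δ a (symι K E (symPr K E (δ b (symι K E e₁))) * symι K E e₂))
            - symPr K E (δ a (symι K E e₁ * symι K E (symPr K E (δ b (symι K E e₂)))))) := by
  intro a b e₁ e₂
  have hcomp : ∀ c d : h, symPr K E (δ c (δ d (symι K E e₁ * symι K E e₂)))
      = symPr K E (δ c (symι K E (symPr K E (δ d (symι K E e₁ * symι K E e₂)))))
        + symPr K E (δ c (symι K E (symPr K E (δ d (symι K E e₁))) * symι K E e₂))
        + symPr K E (δ c (symι K E e₁ * symι K E (symPr K E (δ d (symι K E e₂))))) := by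
    intro c d
    conv_lhs => rw [(hcoder d).apply_symι_mul_symι (hone d)]
    simp only [map_add]
  have hbracket : δ ⁅a, b⁆ = δ a * δ b - δ b * δ a := by rw [LieHom.map_lie, Ring.lie_def]
  rw [hbracket, LinearMap.sub_apply, Module.End.mul_apply, Module.End.mul_apply, map_sub,
    hcomp a b, hcomp b a]
  abel
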